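/- arXiv:1503.03715 — 7 statements merged into one kernel-verified Lean document; each statement's English description precedes it below -/
import Mathlib

section
/- Feedback refinement relations compose: if Q is a feedback refinement relation from S₁ to S₂ and R is a feedback refinement relation from S₂ to S₃, then the composition R ∘ Q (defined by (x₁,x₃) ∈ R∘Q iff there exists x₂ with (x₁,x₂) ∈ Q and (x₂,x₃) ∈ R) is a feedback refinement relation from S₁ to S₃. -/
def IsFRR {X₁ X₂ U : Type*} (U₁ U₂ : Set U)
    (F₁ : X₁ → U → Set X₁) (F₂ : X₂ → U → Set X₂) (Q : X₁ → X₂ → Prop) : Prop :=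
  U₂ ⊆ U₁ ∧ (∀ x₁, ∃ x₂, Q x₁ x₂) ∧
  ∀ x₁ x₂, Q x₁ x₂ → ∀ u ∈ U₂, (F₂ x₂ u).Nonempty →
    (F₁ x₁ u).Nonempty ∧ ∀ x₁' ∈ F₁ x₁ u, ∀ x₂', Q x₁' x₂' → x₂' ∈ F₂ x₂ u

namespace IsFRR

variable {X₁ X₂ X₃ U : Type*} {U₁ U₂ U₃ : Set U}
  {F₁ : X₁ → U → Set X₁} {F₂ : X₂ → U → Set X₂} {F₃ : X₃ → U → Set X₃}
  {Q : X₁ → X₂ → Prop} {R : X₂ → X₃ → Prop}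
  {x₁ x₁' : X₁} {x₂ x₂' : X₂} {u : U}

theorem inputs_subset (hQ : IsFRR U₁ U₂ F₁ F₂ Q) : U₂ ⊆ U₁ := hQ.1

theorem leftTotal (hQ : IsFRR U₁ U₂ F₁ F₂ Q) : Relator.LeftTotal Q := hQ.2.1

theorem nonempty_of_nonempty (hQ : IsFRR U₁ U₂ F₁ F₂ Q) (hx : Q x₁ x₂) (hu : u ∈ U₂)
    (hne : (F₂ x₂ u).Nonempty) : (F₁ x₁ u).Nonempty :=
  (hQ.2.2 x₁ x₂ hx u hu hne).1

theorem mem_of_mem (hQ : IsFRR U₁ U₂ F₁ F₂ Q) (hx : Q x₁ x₂) (hu : u ∈ U₂)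
    (hne : (F₂ x₂ u).Nonempty) (hx₁' : x₁' ∈ F₁ x₁ u) (hx' : Q x₁' x₂') : x₂' ∈ F₂ x₂ u :=
  (hQ.2.2 x₁ x₂ hx u hu hne).2 x₁' hx₁' x₂' hx'

theorem comp (hQ : IsFRR U₁ U₂ F₁ F₂ Q) (hR : IsFRR U₂ U₃ F₂ F₃ R) :
    IsFRR U₁ U₃ F₁ F₃ (Relation.Comp Q R) := by
  refine ⟨hR.inputs_subset.trans hQ.inputs_subset,
    hQ.leftTotal.trans (fun _ x₂ _ h₁₂ h₂₃ ↦ ⟨x₂, h₁₂, h₂₃⟩) hR.leftTotal, ?_⟩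
  rintro x₁ x₃ ⟨x₂, hx₁₂, hx₂₃⟩ u hu hne₃
  have hu₂ : u ∈ U₂ := hR.inputs_subset hu
  have hne₂ : (F₂ x₂ u).Nonempty := hR.nonempty_of_nonempty hx₂₃ hu hne₃
  refine ⟨hQ.nonempty_of_nonempty hx₁₂ hu₂ hne₂, ?_⟩
  rintro x₁' hx₁' x₃' ⟨x₂', hx₁₂', hx₂₃'⟩
  exact hR.mem_of_mem hx₂₃ hu hne₃ (hQ.mem_of_mem hx₁₂ hu₂ hne₂ hx₁' hx₁₂') hx₂₃'

end IsFRR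

/-- feedback refinement relations compose. -/
theorem frr_trans {X₁ X₂ X₃ U : Type*} (U₁ U₂ U₃ : Set U)
    (F₁ : X₁ → U → Set X₁) (F₂ : X₂ → U → Set X₂) (F₃ : X₃ → U → Set X₃)
    (Q : X₁ → X₂ → Prop) (R : X₂ → X₃ → Prop)
    (hQ : IsFRR U₁ U₂ F₁ F₂ Q) (hR : IsFRR U₂ U₃ F₂ F₃ R) :
    IsFRR U₁ U₃ F₁ F₃ (fun x₁ x₃ => ∃ x₂, Q x₁ x₂ ∧ R x₂ x₃) :=
  hQ.comp hR
end

section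
/- Let X₂ be a cover of X₁ by nonempty subsets, and let S₁, S₂ be simple systems with state sets X₁, X₂ respectively and U₂ ⊆ U₁. Then the membership relation ∈ (i.e., {(x,Ω) : x ∈ Ω}) is a feedback refinement relation from S₁ to S₂ if and only if: (1) whenever x ∈ Ω ∈ X₂, U_{S₂}(Ω) ⊆ U_{S₁}(x); and (2) whenever Ω, Ω' ∈ X₂, u ∈ U_{S₂}(Ω), and Ω' ∩ F₁(Ω,u) ≠ ∅, then Ω' ∈ F₂(Ω,u). Here F₁(Ω,u) = ⋃_{x∈Ω} F₁(x,u). -/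
/-- The membership relation `{(x,Ω) : x ∈ Ω, Ω ∈ C}` is a feedback refinement
relation from the simple system `(F₁, U₁)` on `X` to the simple system `(F₂, U₂)`
whose states are the cells of the cover `C`. -/
def IsFRRmem {X U : Type*} (C : Set (Set X)) (U₁ U₂ : Set U)
    (F₁ : X → U → Set X) (F₂ : Set X → U → Set (Set X)) : Prop :=
  U₂ ⊆ U₁ ∧ (∀ x, ∃ Ω ∈ C, x ∈ Ω) ∧
  ∀ Ω ∈ C, ∀ x ∈ Ω, ∀ u ∈ U₂, (F₂ Ω u).Nonempty →
    (F₁ x u).Nonempty ∧ ∀ x' ∈ F₁ x u, ∀ Ω' ∈ C, x' ∈ Ω' → Ω' ∈ F₂ Ω u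

theorem frr_mem_iff_general {X U : Type*} (C : Set (Set X)) (U₁ U₂ : Set U)
    (hU : U₂ ⊆ U₁)
    (hcover : ∀ x : X, ∃ Ω ∈ C, x ∈ Ω)
    (F₁ : X → U → Set X) (F₂ : Set X → U → Set (Set X)) :
    IsFRRmem C U₁ U₂ F₁ F₂ ↔
      ((∀ Ω ∈ C, ∀ x ∈ Ω, ∀ u ∈ U₂, (F₂ Ω u).Nonempty → (F₁ x u).Nonempty) ∧
       (∀ Ω ∈ C, ∀ Ω' ∈ C, ∀ u ∈ U₂, (F₂ Ω u).Nonempty →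
         (∃ x ∈ Ω, (Ω' ∩ F₁ x u).Nonempty) → Ω' ∈ F₂ Ω u)) := by
  constructor
  · rintro ⟨-, -, hfrr⟩
    refine ⟨fun Ω hΩ x hx u hu hF₂ ↦ (hfrr Ω hΩ x hx u hu hF₂).1, ?_⟩
    rintro Ω hΩ Ω' hΩ' u hu hF₂ ⟨x, hx, x', hx'Ω', hx'F₁⟩
    exact (hfrr Ω hΩ x hx u hu hF₂).2 x' hx'F₁ Ω' hΩ' hx'Ω'
  · rintro ⟨hinput, hsucc⟩
    refine ⟨hU, hcover, fun Ω hΩ x hx u hu hF₂ ↦ ⟨hinput Ω hΩ x hx u hu hF₂, ?_⟩⟩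
    intro x' hx'F₁ Ω' hΩ' hx'Ω'
    exact hsucc Ω hΩ Ω' hΩ' u hu hF₂ ⟨x, hx, x', hx'Ω', hx'F₁⟩

/-- characterization of the membership relation being a feedback
refinement relation when the abstract states form a cover of the concrete state
alphabet by nonempty subsets. -/
theorem frr_mem_iff {X U : Type*} (C : Set (Set X)) (U₁ U₂ : Set U)
    (hU : U₂ ⊆ U₁)
    (hne : ∀ Ω ∈ C, (Ω : Set X).Nonempty)
    (hcover : ∀ x : X, ∃ Ω ∈ C, x ∈ Ω)
    (F₁ : X → U → Set X) (F₂ : Set X → U → Set (Set X)) :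
    IsFRRmem C U₁ U₂ F₁ F₂ ↔
      ((∀ Ω ∈ C, ∀ x ∈ Ω, ∀ u ∈ U₂, (F₂ Ω u).Nonempty → (F₁ x u).Nonempty) ∧
       (∀ Ω ∈ C, ∀ Ω' ∈ C, ∀ u ∈ U₂, (F₂ Ω u).Nonempty →
         (∃ x ∈ Ω, (Ω' ∩ F₁ x u).Nonempty) → Ω' ∈ F₂ Ω u)) :=
  frr_mem_iff_general C U₁ U₂ hU hcover F₁ F₂
end

section
/- Let S₃ be a simple system with state set X₃ and Q : X₁ ⇉ X₃ a strict relation satisfying: whenever ∅ ≠ Q⁻¹(x) = Q⁻¹(x̃), ∅ ≠ Q⁻¹(x') = Q⁻¹(x̃'), x̃' ∈ F₃(x̃,u), and u ∈ U_{S₃}(x), then x' ∈ F₃(x,u). Define X₂ = {Ω : ∅ ≠ Ω = Q⁻¹(x) for some x ∈ X₃}, the relation R ⊆ X₂ × X₃ by R(Ω) = {x ∈ X₃ : Ω = Q⁻¹(x)}, U₂ = U₃, and F₂(Ω,u) = R⁻¹(F₃(R(Ω),u)). Then for any simple system S₁ with state set X₁ satisfying S₁ ≼_Q S₃: (a) X₂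 is a cover of X₁ by nonempty subsets, (b) the membership relation ∈ is a feedback refinement relation from S₁ to S₂ (where S₂ has state set X₂, input set U₂, transition F₂), and (c) R is a feedback refinement relation from S₂ to S₃. -/
/-- `Q⁻¹(x₃)` for a relation `Q ⊆ X₁ × X₃`. -/
def Qinv {X₁ X₃ : Type*} (Q : X₁ → X₃ → Prop) (x₃ : X₃) : Set X₁ :=
  {x₁ | Q x₁ x₃}

/-- The canonical abstract state alphabet: nonempty sets of the form `Q⁻¹(x₃)`. -/
abbrev canonState {X₁ X₃ : Type*} (Q : X₁ → X₃ → Prop) : Type _ :=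
  {Ω : Set X₁ // Ω.Nonempty ∧ ∃ x₃, Ω = Qinv Q x₃}

/-- The canonical relation `R ⊆ X₂ × X₃`. -/
def canonR {X₁ X₃ : Type*} (Q : X₁ → X₃ → Prop) (Ω : canonState Q) (x₃ : X₃) :
    Prop :=
  (Ω : Set X₁) = Qinv Q x₃

/-- The canonical abstract transition function `F₂(Ω,u) = R⁻¹(F₃(R(Ω),u))`. -/
def canonF {X₁ X₃ U : Type*} (Q : X₁ → X₃ → Prop) (F₃ : X₃ → U → Set X₃)
    (Ω : canonState Q) (u : U) : Set (canonState Q) :=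
  {Ω' | ∃ x₃', canonR Q Ω' x₃' ∧ ∃ x₃, canonR Q Ω x₃ ∧ x₃' ∈ F₃ x₃ u}

/-!
Strictness of `Q`, which is part of `S₁ ≼_Q S₃`, puts every `x₁` into some `Q⁻¹(x₃)`. Both
refinement properties are then transported from `S₁ ≼_Q S₃` through the identification
`Ω = Q⁻¹(x₃)`, except for `F₂(Ω, u) ⊆ R⁻¹(F₃(x₃, u))`: a successor `Ω'` of `Ω` is only witnessed by
a transition between *some* representatives of `Ω` and `Ω'`, and condition (C) moves that
transition to arbitrary representatives.
-/

section CanonicalAbstraction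

variable {X₁ X₃ U : Type*} {Q : X₁ → X₃ → Prop}

theorem canonR.mem_iff {Ω : canonState Q} {x₃ : X₃} (hR : canonR Q Ω x₃) {x₁ : X₁} :
    x₁ ∈ (Ω : Set X₁) ↔ Q x₁ x₃ := by
  rw [canonR] at hR
  rw [hR]
  rfl

def canonState.ofRel {x₁ : X₁} {x₃ : X₃} (h : Q x₁ x₃) : canonState Q :=
  ⟨Qinv Q x₃, ⟨x₁, h⟩, x₃, rfl⟩

theorem canonR_ofRel {x₁ : X₁} {x₃ : X₃} (h : Q x₁ x₃) : canonR Q (canonState.ofRel h) x₃ :=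
  rfl

theorem mem_ofRel {x₁ : X₁} {x₃ : X₃} (h : Q x₁ x₃) : x₁ ∈ (canonState.ofRel h : Set X₁) :=
  h

theorem exists_canonR (Ω : canonState Q) : ∃ x₃, canonR Q Ω x₃ :=
  Ω.2.2

theorem exists_mem_canonState (hstrict : ∀ x₁, ∃ x₃, Q x₁ x₃) (x₁ : X₁) :
    ∃ Ω : canonState Q, x₁ ∈ (Ω : Set X₁) :=
  let ⟨_, h⟩ := hstrict x₁
  ⟨canonState.ofRel h, mem_ofRel h⟩

variable {U₁ U₃ : Set U} {F₁ : X₁ → U → Set X₁} {F₃ : X₃ → U → Set X₃}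

theorem isFRR_mem_canonState (hFRR : IsFRR U₁ U₃ F₁ F₃ Q) :
    IsFRR U₁ U₃ F₁ (canonF Q F₃) (fun x₁ Ω => x₁ ∈ (Ω : Set X₁)) := by
  obtain ⟨hU, hstrict, hstep⟩ := hFRR
  refine ⟨hU, exists_mem_canonState hstrict, ?_⟩
  rintro x₁ Ω hx₁ u hu ⟨-, x₃', -, x₃, hR, hx₃'⟩
  obtain ⟨hne, hsucc⟩ := hstep x₁ x₃ (hR.mem_iff.1 hx₁) u hu ⟨x₃', hx₃'⟩
  refine ⟨hne, fun x₁' hx₁' Ω' hx₁'Ω' => ?_⟩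
  obtain ⟨y, hR'⟩ := exists_canonR Ω'
  exact ⟨y, hR', x₃, hR, hsucc x₁' hx₁' y (hR'.mem_iff.1 hx₁'Ω')⟩

theorem isFRR_canonR (hFRR : IsFRR U₁ U₃ F₁ F₃ Q)
    (hC : ∀ (x x' x'' x''' : X₃) (u : U),
      (Qinv Q x).Nonempty → Qinv Q x = Qinv Q x'' →
      (Qinv Q x').Nonempty → Qinv Q x' = Qinv Q x''' →
      x''' ∈ F₃ x'' u → u ∈ U₃ → (F₃ x u).Nonempty → x' ∈ F₃ x u) :
    IsFRR U₃ U₃ (canonF Q F₃) F₃ (canonR Q) := by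
  obtain ⟨-, hstrict, hstep⟩ := hFRR
  refine ⟨subset_rfl, exists_canonR, fun Ω x₃ hR u hu hne => ⟨?_, ?_⟩⟩
  · obtain ⟨x₁, hx₁⟩ := Ω.2.1
    obtain ⟨⟨x₁', hx₁'⟩, hsucc⟩ := hstep x₁ x₃ (hR.mem_iff.1 hx₁) u hu hne
    obtain ⟨z, hz⟩ := hstrict x₁'
    exact ⟨canonState.ofRel hz, z, canonR_ofRel hz, x₃, hR, hsucc x₁' hx₁' z hz⟩
  · rintro Ω' ⟨a, ha, b, hb, hab⟩ x₃' hR'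
    exact hC x₃ x₃' b a u (hR ▸ Ω.2.1) (hR ▸ hb) (hR' ▸ Ω'.2.1) (hR' ▸ ha) hab hu hne

end CanonicalAbstraction

theorem canonical_abstraction_general {X₁ X₃ U : Type*} (U₁ U₃ : Set U)
    (F₁ : X₁ → U → Set X₁) (F₃ : X₃ → U → Set X₃) (Q : X₁ → X₃ → Prop)
    (hC : ∀ (x x' x'' x''' : X₃) (u : U),
      (Qinv Q x).Nonempty → Qinv Q x = Qinv Q x'' →
      (Qinv Q x').Nonempty → Qinv Q x' = Qinv Q x''' →
      x''' ∈ F₃ x'' u → u ∈ U₃ → (F₃ x u).Nonempty → x' ∈ F₃ x u)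
    (hFRR : IsFRR U₁ U₃ F₁ F₃ Q) :
    (∀ x₁ : X₁, ∃ Ω : canonState Q, x₁ ∈ (Ω : Set X₁)) ∧
    IsFRR U₁ U₃ F₁ (canonF Q F₃) (fun x₁ Ω => x₁ ∈ (Ω : Set X₁)) ∧
    IsFRR U₃ U₃ (canonF Q F₃) F₃ (canonR Q) :=
  ⟨exists_mem_canonState hFRR.2.1, isFRR_mem_canonState hFRR, isFRR_canonR hFRR hC⟩

/-- canonicity.  Given a strict relation `Q` satisfying condition (C)
and any concrete simple system `S₁` with `S₁ ≼_Q S₃`, the canonically constructed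
abstraction `S₂` satisfies:  (a) its state alphabet is a cover of `X₁` by nonempty
subsets, (b) `S₁ ≼_∈ S₂`, and (c) `S₂ ≼_R S₃`. -/
theorem canonical_abstraction {X₁ X₃ U : Type*} (U₁ U₃ : Set U)
    (F₁ : X₁ → U → Set X₁) (F₃ : X₃ → U → Set X₃) (Q : X₁ → X₃ → Prop)
    (hstrict : ∀ x₁, ∃ x₃, Q x₁ x₃)
    (hC : ∀ (x x' x'' x''' : X₃) (u : U),
      (Qinv Q x).Nonempty → Qinv Q x = Qinv Q x'' →
      (Qinv Q x').Nonempty → Qinv Q x' = Qinv Q x''' →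
      x''' ∈ F₃ x'' u → u ∈ U₃ → (F₃ x u).Nonempty → x' ∈ F₃ x u)
    (hFRR : IsFRR U₁ U₃ F₁ F₃ Q) :
    (∀ x₁ : X₁, ∃ Ω : canonState Q, x₁ ∈ (Ω : Set X₁)) ∧
    IsFRR U₁ U₃ F₁ (canonF Q F₃) (fun x₁ Ω => x₁ ∈ (Ω : Set X₁)) ∧
    IsFRR U₃ U₃ (canonF Q F₃) F₃ (canonR Q) :=
  canonical_abstraction_general U₁ U₃ F₁ F₃ Q hC hFRR
end

section
/- Let ℓ ∈ ℕ, p₁,...,p_ℓ ∈ ℝⁿ, and let F₁ : ℝⁿ × U₁ ⇉ ℝⁿ satisfy F₁(x + ⟨k,p⟩, u) = F₁(x,u) + ⟨k,p⟩ for all k ∈ ℤˡ, x ∈ ℝⁿ, u ∈ U₁, where ⟨k,p⟩ = Σᵢ kᵢpᵢ. Define π(Ω) = {x + ⟨k,p⟩ : x ∈ Ω, k ∈ ℤˡ} for Ω ⊆ ℝⁿ. Let R be a set of nonempty subsets of ℝⁿ such that X₂ = {π(Ω) : Ω ∈ R} is a cover of ℝⁿ, and let S₂ be a simple system with state set X₂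 and input set U₂ ⊆ U₁. Then the membership relation ∈ is a feedback refinement relation from S₁ (the simple system on ℝⁿ with transition F₁) to S₂ if and only if: (a) x ∈ Ω ∈ R implies U_{S₂}(π(Ω)) ⊆ U_{S₁}(x), and (b) if Ω, Ω' ∈ R, u ∈ U_{S₂}(π(Ω)), and π(Ω') ∩ F₁(Ω,u) ≠ ∅, then π(Ω') ∈ F₂(π(Ω),u). -/
open scoped BigOperators

/-- The periodization of a set: all translates by integer combinations of the
periods `p i`. -/
def periodize {n ℓ : ℕ} (p : Fin ℓ → (Fin n → ℝ)) (Ω : Set (Fin n → ℝ)) :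
    Set (Fin n → ℝ) :=
  {y | ∃ x ∈ Ω, ∃ k : Fin ℓ → ℤ, y = x + ∑ i, (k i : ℝ) • p i}

/-!
A point `x + v` of a cell `Ω + L`, with `x ∈ Ω` and `v` in the period lattice `L`, has the
successors of `x` translated by `v`, and a cell `Ω' + L` is invariant under translation by `v`.
Hence both clauses of the feedback refinement condition at `x + v` reduce to the same clauses
at the representative point `x ∈ Ω`, which are (a) and (b).
-/

open Set Pointwise

section

variable {X U : Type*}

/-- Conditions (a) and (b), for cells `π Ω` with representatives `Ω ∈ R`. -/
def IsFRRmemOnRepresentatives (π : Set X → Set X) (R : Set (Set X)) (U₂ : Set U)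
    (F₁ : X → U → Set X) (F₂ : Set X → U → Set (Set X)) : Prop :=
  (∀ Ω ∈ R, ∀ x ∈ Ω, ∀ u ∈ U₂, (F₂ (π Ω) u).Nonempty → (F₁ x u).Nonempty) ∧
  ∀ Ω ∈ R, ∀ Ω' ∈ R, ∀ u ∈ U₂, (F₂ (π Ω) u).Nonempty →
    (∃ x ∈ Ω, (π Ω' ∩ F₁ x u).Nonempty) → π Ω' ∈ F₂ (π Ω) u

theorem IsFRRmem.isFRRmemOnRepresentatives {π : Set X → Set X} (hπ : ∀ Ω, Ω ⊆ π Ω)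
    {R : Set (Set X)} {U₁ U₂ : Set U} {F₁ : X → U → Set X} {F₂ : Set X → U → Set (Set X)}
    (h : IsFRRmem (π '' R) U₁ U₂ F₁ F₂) : IsFRRmemOnRepresentatives π R U₂ F₁ F₂ := by
  obtain ⟨-, -, h⟩ := h
  refine ⟨fun Ω hΩ x hx u hu hne => (h _ ⟨Ω, hΩ, rfl⟩ x (hπ Ω hx) u hu hne).1, ?_⟩
  rintro Ω hΩ Ω' hΩ' u hu hne ⟨x, hx, x', hx'Ω', hx'F⟩
  exact (h _ ⟨Ω, hΩ, rfl⟩ x (hπ Ω hx) u hu hne).2 x' hx'F _ ⟨Ω', hΩ', rfl⟩ hx'Ω'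

end

section

variable {X U : Type*} [AddCommGroup X] (L : AddSubgroup X)

theorem add_mem_add_addSubgroup_iff {Ω : Set X} {v y : X} (hv : v ∈ L) :
    y + v ∈ Ω + (L : Set X) ↔ y ∈ Ω + (L : Set X) := by
  simp only [Set.mem_add, SetLike.mem_coe]
  constructor
  · rintro ⟨x, hx, w, hw, h⟩
    exact ⟨x, hx, w - v, L.sub_mem hw hv, by rw [← add_sub_assoc, h, add_sub_cancel_right]⟩
  · rintro ⟨x, hx, w, hw, rfl⟩
    exact ⟨x, hx, w + v, L.add_mem hw hv, (add_assoc x w v).symm⟩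

theorem IsFRRmemOnRepresentatives.isFRRmem_add_addSubgroup {R : Set (Set X)} {U₁ U₂ : Set U}
    {F₁ : X → U → Set X} {F₂ : Set X → U → Set (Set X)} (hU : U₂ ⊆ U₁)
    (hper : ∀ v ∈ L, ∀ x u, F₁ (x + v) u = (· + v) '' F₁ x u)
    (hcover : ∀ x, ∃ Ω ∈ R, x ∈ Ω + (L : Set X))
    (h : IsFRRmemOnRepresentatives (· + (L : Set X)) R U₂ F₁ F₂) :
    IsFRRmem ((· + (L : Set X)) '' R) U₁ U₂ F₁ F₂ := by
  obtain ⟨hnonempty, hsucc⟩ := h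
  refine ⟨hU, fun x => ?_, ?_⟩
  · obtain ⟨Ω, hΩ, hx⟩ := hcover x
    exact ⟨_, mem_image_of_mem _ hΩ, hx⟩
  rintro _ ⟨Ω, hΩ, rfl⟩ _ ⟨x, hx, v, hv, rfl⟩ u hu hne
  rw [hper v hv]
  refine ⟨(hnonempty Ω hΩ x hx u hu hne).image _, ?_⟩
  rintro _ ⟨y, hy, rfl⟩ _ ⟨Ω', hΩ', rfl⟩ hyΩ'
  exact hsucc Ω hΩ Ω' hΩ' u hu hne ⟨x, hx, y, (add_mem_add_addSubgroup_iff L hv).1 hyΩ', hy⟩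

end

theorem periodize_eq_add_span {n ℓ : ℕ} (p : Fin ℓ → (Fin n → ℝ)) (Ω : Set (Fin n → ℝ)) :
    periodize p Ω = Ω + (Submodule.span ℤ (range p) : Set (Fin n → ℝ)) := by
  ext y
  simp only [periodize, mem_ofPred_eq, Set.mem_add, SetLike.mem_coe,
    Submodule.mem_span_range_iff_exists_fun, Int.cast_smul_eq_zsmul]
  constructor
  · rintro ⟨x, hx, k, rfl⟩
    exact ⟨x, hx, _, ⟨k, rfl⟩, rfl⟩
  · rintro ⟨x, hx, _, ⟨k, rfl⟩, rfl⟩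
    exact ⟨x, hx, k, rfl⟩

theorem frr_periodic_general {n ℓ : ℕ} {U : Type*} (p : Fin ℓ → (Fin n → ℝ))
    (U₁ U₂ : Set U) (hU : U₂ ⊆ U₁)
    (F₁ : (Fin n → ℝ) → U → Set (Fin n → ℝ))
    (hper : ∀ (k : Fin ℓ → ℤ) (x : Fin n → ℝ) (u : U),
      F₁ (x + ∑ i, (k i : ℝ) • p i) u =
        (fun y => y + ∑ i, (k i : ℝ) • p i) '' F₁ x u)
    (R : Set (Set (Fin n → ℝ)))
    (hcover : ∀ x : Fin n → ℝ, ∃ Ω ∈ R, x ∈ periodize p Ω)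
    (F₂ : Set (Fin n → ℝ) → U → Set (Set (Fin n → ℝ))) :
    IsFRRmem ((periodize p) '' R) U₁ U₂ F₁ F₂ ↔
      ((∀ Ω ∈ R, ∀ x ∈ Ω, ∀ u ∈ U₂,
          (F₂ (periodize p Ω) u).Nonempty → (F₁ x u).Nonempty) ∧
       (∀ Ω ∈ R, ∀ Ω' ∈ R, ∀ u ∈ U₂, (F₂ (periodize p Ω) u).Nonempty →
          (∃ x ∈ Ω, (periodize p Ω' ∩ F₁ x u).Nonempty) →
          periodize p Ω' ∈ F₂ (periodize p Ω) u)) := by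
  set L := (Submodule.span ℤ (range p)).toAddSubgroup
  have hπ : periodize p = (· + (L : Set (Fin n → ℝ))) := funext (periodize_eq_add_span p)
  have hperL : ∀ v ∈ L, ∀ x u, F₁ (x + v) u = (· + v) '' F₁ x u := by
    intro v hv x u
    obtain ⟨k, rfl⟩ := (Submodule.mem_span_range_iff_exists_fun ℤ).1 hv
    simpa only [Int.cast_smul_eq_zsmul] using hper k x u
  rw [hπ] at hcover ⊢
  exact ⟨IsFRRmem.isFRRmemOnRepresentatives fun Ω => subset_add_left Ω L.zero_mem,
    IsFRRmemOnRepresentatives.isFRRmem_add_addSubgroup L hU hperL hcover⟩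

/-- characterization of the membership relation being a feedback
refinement relation from a sampled system with periodic dynamics to an abstraction
whose cells are periodizations of the cells in `R`. -/
theorem frr_periodic {n ℓ : ℕ} {U : Type*} (p : Fin ℓ → (Fin n → ℝ))
    (U₁ U₂ : Set U) (hU : U₂ ⊆ U₁)
    (F₁ : (Fin n → ℝ) → U → Set (Fin n → ℝ))
    (hper : ∀ (k : Fin ℓ → ℤ) (x : Fin n → ℝ) (u : U),
      F₁ (x + ∑ i, (k i : ℝ) • p i) u =
        (fun y => y + ∑ i, (k i : ℝ) • p i) '' F₁ x u)
    (R : Set (Set (Fin n → ℝ))) (hRne : ∀ Ω ∈ R, (Ω : Set (Fin n → ℝ)).Nonempty)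
    (hcover : ∀ x : Fin n → ℝ, ∃ Ω ∈ R, x ∈ periodize p Ω)
    (F₂ : Set (Fin n → ℝ) → U → Set (Set (Fin n → ℝ))) :
    IsFRRmem ((periodize p) '' R) U₁ U₂ F₁ F₂ ↔
      ((∀ Ω ∈ R, ∀ x ∈ Ω, ∀ u ∈ U₂,
          (F₂ (periodize p Ω) u).Nonempty → (F₁ x u).Nonempty) ∧
       (∀ Ω ∈ R, ∀ Ω' ∈ R, ∀ u ∈ U₂, (F₂ (periodize p Ω) u).Nonempty →
          (∃ x ∈ Ω, (periodize p Ω' ∩ F₁ x u).Nonempty) →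
          periodize p Ω' ∈ F₂ (periodize p Ω) u)) :=
  frr_periodic_general p U₁ U₂ hU F₁ hper R hcover F₂
end

section
/- Component-wise comparison lemma for perturbed solutions: Let τ > 0, A ⊆ ℝⁿ, and f : ℝⁿ → ℝⁿ continuous. Let ξ₁, ξ₂ : [0,τ] → A be absolutely continuous with |ξᵢ'(t) − f(ξᵢ(t))| ≤ wᵢ(t) (component-wise) for a.e. t ∈ [0,τ], where w₁, w₂ : [0,τ] → ℝ₊ⁿ are integrable. Let L ∈ ℝⁿˣⁿ with L_{i,j} ≥ 0 for i ≠ j, and suppose for all x, y ∈ A and each i: xᵢ ≥ yᵢ implies fᵢ(x) − fᵢ(y) ≤ Σⱼ L_{i,j}|xⱼ − yⱼ|. Let ρ : [0,τ] → ℝ₊ⁿ be absolutely continuous with ρ'(t) = Lρ(t) + w₁(t) + w₂(t) for a.e. t. If |ξ₁(0) − ξ₂(0)| ≤ ρ(0) component-wise, then |ξ₁(t) − ξ₂(t)| ≤ ρ(t) component-wise for every t ∈ [0,τ]. -/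
/-!
For `ε > 0` and `K` larger than every row sum of `L`, `v = ρ + ε e^{K t} 𝟙` is a strict
supersolution: `v' ≥ L v + w₁ + w₂ + ε`. Suppose `|u| = |ξ₁ - ξ₂|` reaches `v`, and take the first
time `T` and a component `i` where it does, say `u_i(T) = v_i(T) > 0`. Just before `T`,
quasi-monotonicity of `f`, the signs `L_ij ≥ 0` (`j ≠ i`) and `|u_j| ≤ v_j` give
`(u_i - v_i)' ≤ L_ii (u_i - v_i) - ε`, which is negative near `T` because `u_i - v_i → 0`. So the
nonpositive function `u_i - v_i` would decrease to `0` at `T`, which is absurd. Let `ε → 0`.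
-/

open MeasureTheory Set Filter Topology Matrix

section Primitive

variable {E : Type*} [NormedAddCommGroup E] [NormedSpace ℝ E] {a b : ℝ}

/-- `x` is absolutely continuous on `[a, b]` with a.e. derivative `x'`, in integral form. -/
def IsPrimitiveOn (x x' : ℝ → E) (a b : ℝ) : Prop :=
  IntervalIntegrable x' volume a b ∧ ∀ t ∈ Icc a b, x t = x a + ∫ s in a..t, x' s

namespace IsPrimitiveOn

variable {x y x' y' : ℝ → E}

lemma intervalIntegrable (h : IsPrimitiveOn x x' a b) {s t : ℝ} (hs : s ∈ Icc a b)
    (ht : t ∈ Icc a b) : IntervalIntegrable x' volume s t :=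
  h.1.mono_set (uIcc_subset_uIcc (Icc_subset_uIcc hs) (Icc_subset_uIcc ht))

lemma sub_eq_integral (h : IsPrimitiveOn x x' a b) {s t : ℝ} (hs : s ∈ Icc a b)
    (ht : t ∈ Icc a b) : x t - x s = ∫ σ in s..t, x' σ := by
  have ha : a ∈ Icc a b := ⟨le_rfl, hs.1.trans hs.2⟩
  rw [h.2 t ht, h.2 s hs, ← intervalIntegral.integral_interval_sub_left
    (h.intervalIntegrable ha ht) (h.intervalIntegrable ha hs)]
  abel

lemma continuousOn (h : IsPrimitiveOn x x' a b) : ContinuousOn x (Icc a b) := by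
  rcases lt_or_ge b a with hba | hab
  · simp [Icc_eq_empty_of_lt hba]
  have hprim := intervalIntegral.continuousOn_primitive_interval' h.1 left_mem_uIcc
  rw [uIcc_of_le hab] at hprim
  exact (continuousOn_const.add hprim).congr h.2

lemma add (hx : IsPrimitiveOn x x' a b) (hy : IsPrimitiveOn y y' a b) :
    IsPrimitiveOn (fun t => x t + y t) (fun t => x' t + y' t) a b := by
  refine ⟨hx.1.add hy.1, fun t ht => ?_⟩
  have ha : a ∈ Icc a b := ⟨le_rfl, ht.1.trans ht.2⟩
  dsimp only
  rw [hx.2 t ht, hy.2 t ht, intervalIntegral.integral_add (hx.intervalIntegrable ha ht)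
    (hy.intervalIntegrable ha ht)]
  abel

lemma sub (hx : IsPrimitiveOn x x' a b) (hy : IsPrimitiveOn y y' a b) :
    IsPrimitiveOn (fun t => x t - y t) (fun t => x' t - y' t) a b := by
  refine ⟨hx.1.sub hy.1, fun t ht => ?_⟩
  have ha : a ∈ Icc a b := ⟨le_rfl, ht.1.trans ht.2⟩
  dsimp only
  rw [hx.2 t ht, hy.2 t ht, intervalIntegral.integral_sub (hx.intervalIntegrable ha ht)
    (hy.intervalIntegrable ha ht)]
  abel

lemma neg (h : IsPrimitiveOn x x' a b) : IsPrimitiveOn (fun t => -x t) (fun t => -x' t) a b :=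
  ⟨h.1.neg, fun t ht => by dsimp only; rw [h.2 t ht, intervalIntegral.integral_neg]; abel⟩

lemma apply {ι : Type*} [Fintype ι] {x x' : ℝ → ι → ℝ} (h : IsPrimitiveOn x x' a b) (i : ι) :
    IsPrimitiveOn (x · i) (x' · i) a b := by
  refine ⟨⟨h.1.1.eval i, h.1.2.eval i⟩, fun t ht => ?_⟩
  have ha : a ∈ Icc a b := ⟨le_rfl, ht.1.trans ht.2⟩
  dsimp only
  rw [h.2 t ht, Pi.add_apply]
  exact congrArg _ ((ContinuousLinearMap.proj (R := ℝ) i).intervalIntegral_comp_comm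
    (h.intervalIntegrable ha ht)).symm

lemma add_mul_le_of_ae_le {x x' : ℝ → ℝ} (h : IsPrimitiveOn x x' a b) {s t c : ℝ}
    (hs : s ∈ Icc a b) (ht : t ∈ Icc a b) (hst : s ≤ t)
    (hle : ∀ᵐ σ, σ ∈ Icc s t → x' σ ≤ c) : x t ≤ x s + c * (t - s) := by
  have hint : ∫ σ in s..t, x' σ ≤ ∫ _ in s..t, c :=
    intervalIntegral.integral_mono_ae_restrict hst (h.intervalIntegrable hs ht)
      intervalIntegrable_const ((ae_restrict_iff' measurableSet_Icc).2 hle)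
  rw [← h.sub_eq_integral hs ht, intervalIntegral.integral_const, smul_eq_mul] at hint
  linarith

end IsPrimitiveOn

lemma isPrimitiveOn_of_hasDerivAt [CompleteSpace E] {x x' : ℝ → E}
    (hx : ∀ t, HasDerivAt x (x' t) t) (hx' : Continuous x') : IsPrimitiveOn x x' a b :=
  ⟨hx'.intervalIntegrable _ _, fun t _ => by
    rw [intervalIntegral.integral_eq_sub_of_hasDerivAt (fun s _ => hx s)
      (hx'.intervalIntegrable _ _)]
    abel⟩

end Primitive

lemma exists_first_zero {Φ : ℝ → ℝ} {a b : ℝ} (hΦ : ContinuousOn Φ (Icc a b)) (ha : Φ a < 0)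
    {t : ℝ} (ht : t ∈ Icc a b) (hΦt : 0 ≤ Φ t) :
    ∃ T ∈ Ioc a t, Φ T = 0 ∧ ∀ s ∈ Icc a T, Φ s ≤ 0 := by
  set S := Icc a t ∩ Φ ⁻¹' Ici 0
  have hΦ' : ContinuousOn Φ (Icc a t) := hΦ.mono (Icc_subset_Icc_right ht.2)
  have hbdd : BddBelow S := ⟨a, fun s hs => hs.1.1⟩
  have hTS : sInf S ∈ S :=
    (hΦ'.preimage_isClosed_of_isClosed isClosed_Icc isClosed_Ici).csInf_mem
      ⟨t, ⟨⟨ht.1, le_rfl⟩, hΦt⟩⟩ hbdd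
  set T := sInf S
  obtain ⟨c, hc, hΦc⟩ : 0 ∈ Φ '' Icc a T :=
    intermediate_value_Icc hTS.1.1 (hΦ'.mono (Icc_subset_Icc_right hTS.1.2)) ⟨ha.le, hTS.2⟩
  have hcT : c = T :=
    le_antisymm hc.2 (csInf_le hbdd ⟨⟨hc.1, hc.2.trans hTS.1.2⟩, hΦc.ge⟩)
  rw [hcT] at hc hΦc
  refine ⟨T, ⟨lt_of_le_of_ne hc.1 ?_, hTS.1.2⟩, hΦc, fun s hs => not_lt.1 fun hpos => ?_⟩
  · intro haT
    exact ha.ne (haT ▸ hΦc)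
  · have hsT : T ≤ s := csInf_le hbdd ⟨⟨hs.1, hs.2.trans hTS.1.2⟩, hpos.le⟩
    rw [le_antisymm hs.2 hsT] at hpos
    exact hpos.ne' hΦc

lemma exists_first_touch {ι : Type*} [Fintype ι] {φ : ι → ℝ → ℝ} {a b : ℝ}
    (hφ : ∀ i, ContinuousOn (φ i) (Icc a b)) (ha : ∀ i, φ i a < 0) {t : ℝ} {i : ι}
    (ht : t ∈ Icc a b) (hti : 0 ≤ φ i t) :
    ∃ T ∈ Ioc a b, ∃ k, φ k T = 0 ∧ ∀ s ∈ Icc a T, ∀ j, φ j s ≤ 0 := by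
  have hne : (Finset.univ : Finset ι).Nonempty := ⟨i, Finset.mem_univ i⟩
  obtain ⟨T, hT, hΦT, hbelow⟩ := exists_first_zero (Φ := fun s => Finset.univ.sup' hne (φ · s))
    (ContinuousOn.finset_sup'_apply hne fun j _ => hφ j)
    ((Finset.sup'_lt_iff hne).2 fun j _ => ha j) ht
    ((Finset.le_sup' (φ · t) (Finset.mem_univ i)).trans' hti)
  obtain ⟨k, -, hk⟩ := Finset.exists_mem_eq_sup' hne (φ · T)
  exact ⟨T, ⟨hT.1, hT.2.trans ht.2⟩, k, hk ▸ hΦT, fun s hs j =>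
    (Finset.le_sup' (φ · s) (Finset.mem_univ j)).trans (hbelow s hs)⟩

section Comparison

variable {ι : Type*} [Fintype ι] {L : Matrix ι ι ℝ}

lemma Matrix.mulVec_apply_le_diag_mul {i : ι} (hL : ∀ j, j ≠ i → 0 ≤ L i j) {x : ι → ℝ}
    (hx : ∀ j, j ≠ i → x j ≤ 0) : (L *ᵥ x) i ≤ L i i * x i := by
  classical
  calc (L *ᵥ x) i = ∑ j, L i j * x j := rfl
    _ ≤ ∑ j, if j = i then L i i * x i else 0 := Finset.sum_le_sum fun j _ => by
        split_ifs with hj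
        · rw [hj]
        · exact mul_nonpos_of_nonneg_of_nonpos (hL j hj) (hx j hj)
    _ = L i i * x i := by simp

lemma sub_le_diag_mul_sub_sub (hL : ∀ i j, i ≠ j → 0 ≤ L i j) {x y : ι → ℝ} {i : ι}
    {g y' w δ : ℝ} (hxy : ∀ j, |x j| ≤ y j) (hxi : 0 ≤ x i)
    (hg : g ≤ ∑ j, L i j * |x j| + w) (hy' : (L *ᵥ y) i + w + δ ≤ y') :
    g - y' ≤ L i i * (x i - y i) - δ := by
  have hdiag := L.mulVec_apply_le_diag_mul (i := i) (x := fun j => |x j| - y j)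
    (fun j hj => hL i j hj.symm) (fun j _ => sub_nonpos.2 (hxy j))
  simp only [Matrix.mulVec, dotProduct, mul_sub, Finset.sum_sub_distrib,
    abs_of_nonneg hxi] at hdiag hy'
  linarith

variable {u g v v' w : ℝ → ι → ℝ} {a b δ : ℝ}

theorem false_of_first_touch (hL : ∀ i j, i ≠ j → 0 ≤ L i j) (hu : IsPrimitiveOn u g a b)
    (hv : IsPrimitiveOn v v' a b) (hδ : 0 < δ)
    (hsuper : ∀ᵐ t, t ∈ Icc a b → ∀ i, (L *ᵥ v t) i + w t i + δ ≤ v' t i)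
    (hsub : ∀ᵐ t, t ∈ Icc a b → ∀ i, 0 ≤ u t i → g t i ≤ ∑ j, L i j * |u t j| + w t i)
    {T : ℝ} {i : ι} (hT : T ∈ Ioc a b) (hbelow : ∀ s ∈ Icc a T, ∀ j, |u s j| ≤ v s j)
    (hTi : u T i = v T i) (hpos : 0 < u T i) : False := by
  have hTab : T ∈ Icc a b := ⟨hT.1.le, hT.2⟩
  have haT : Icc a T ⊆ Icc a b := Icc_subset_Icc_right hT.2
  set q := fun t => u t i - v t i
  have hq : IsPrimitiveOn q (fun t => g t i - v' t i) a b := (hu.apply i).sub (hv.apply i)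
  have hqT : q T = 0 := sub_eq_zero.2 hTi
  have hnear : ∀ᶠ σ in 𝓝[≤] T, (0 ≤ u σ i ∧ L i i * q σ < δ / 2) ∧ σ ∈ Icc a T := by
    rw [← nhdsWithin_Icc_eq_nhdsLE hT.1]
    have hu_T := ((hu.apply i).continuousOn.mono haT) T ⟨hT.1.le, le_rfl⟩
    have hq_T := (((hq.continuousOn.mono haT) T ⟨hT.1.le, le_rfl⟩).tendsto.const_mul (L i i))
    rw [hqT, mul_zero] at hq_T
    filter_upwards [hu_T.eventually_const_lt hpos, hq_T.eventually_lt_const (half_pos hδ),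
      self_mem_nhdsWithin] with σ h1 h2 h3
    exact ⟨⟨h1.le, h2⟩, h3⟩
  obtain ⟨s, hsT, hs⟩ := mem_nhdsLE_iff_exists_Icc_subset.1 hnear
  have hsa : s ∈ Icc a T := (hs ⟨le_rfl, hsT.le⟩).2
  have hslope : ∀ᵐ σ, σ ∈ Icc s T → g σ i - v' σ i ≤ -(δ / 2) := by
    filter_upwards [hsuper, hsub] with σ hσsuper hσsub hσ
    obtain ⟨⟨hu0, hLq⟩, hσT⟩ := hs hσ
    have := sub_le_diag_mul_sub_sub hL (hbelow σ hσT) hu0 (hσsub (haT hσT) i hu0)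
      (hσsuper (haT hσT) i)
    linarith
  have hdecr := hq.add_mul_le_of_ae_le (haT hsa) hTab hsT.le hslope
  have hqs : q s ≤ 0 := sub_nonpos.2 ((le_abs_self _).trans (hbelow s hsa i))
  nlinarith

theorem abs_lt_of_strict_supersolution (hL : ∀ i j, i ≠ j → 0 ≤ L i j)
    (hu : IsPrimitiveOn u g a b) (hv : IsPrimitiveOn v v' a b)
    (hvpos : ∀ t ∈ Icc a b, ∀ i, 0 < v t i) (hδ : 0 < δ)
    (hsuper : ∀ᵐ t, t ∈ Icc a b → ∀ i, (L *ᵥ v t) i + w t i + δ ≤ v' t i)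
    (hsub : ∀ᵐ t, t ∈ Icc a b → ∀ i,
      (0 ≤ u t i → g t i ≤ ∑ j, L i j * |u t j| + w t i) ∧
      (u t i ≤ 0 → -g t i ≤ ∑ j, L i j * |u t j| + w t i))
    (ha : ∀ i, |u a i| < v a i) : ∀ t ∈ Icc a b, ∀ i, |u t i| < v t i := by
  intro t ht i
  by_contra! hti
  obtain ⟨T, hT, k, hTk, hbelow⟩ := exists_first_touch (φ := fun j s => |u s j| - v s j)
    (fun j => (hu.apply j).continuousOn.abs.sub (hv.apply j).continuousOn)
    (fun j => sub_neg.2 (ha j)) ht (sub_nonneg.2 hti)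
  have hbelow' : ∀ s ∈ Icc a T, ∀ j, |u s j| ≤ v s j := fun s hs j =>
    sub_nonpos.1 (hbelow s hs j)
  have hTk' : |u T k| = v T k := sub_eq_zero.1 hTk
  have hvT : 0 < v T k := hvpos T ⟨hT.1.le, hT.2⟩ k
  rcases lt_or_gt_of_ne (abs_pos.1 (hTk' ▸ hvT)) with hneg | hpos
  · refine false_of_first_touch hL hu.neg hv hδ hsuper ?_ hT (by simpa using hbelow')
      (by simpa [abs_of_neg hneg] using hTk') (neg_pos.2 hneg)
    filter_upwards [hsub] with s hs hsab j hj
    simpa using (hs hsab j).2 (by simpa using hj)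
  · exact false_of_first_touch hL hu hv hδ hsuper (hsub.mono fun s hs hsab j => (hs hsab j).1)
      hT hbelow' (by rwa [abs_of_pos hpos] at hTk') hpos

lemma Matrix.mulVec_add_smul_one_apply (x : ι → ℝ) (c : ℝ) (i : ι) :
    (L *ᵥ (x + c • 1)) i = (L *ᵥ x) i + (∑ j, L i j) * c := by
  simp only [Matrix.mulVec, dotProduct, Pi.add_apply, Pi.smul_apply, Pi.one_apply, smul_eq_mul,
    mul_one, mul_add, Finset.sum_add_distrib, Finset.sum_mul]

lemma exists_rowSum_add_one_le (L : Matrix ι ι ℝ) :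
    ∃ K : ℝ, 0 ≤ K ∧ ∀ i, ∑ j, L i j + 1 ≤ K := by
  refine ⟨∑ i, |∑ j, L i j| + 1, by positivity, fun i => ?_⟩
  have := Finset.single_le_sum (f := fun i => |∑ j, L i j|) (fun i _ => abs_nonneg _)
    (Finset.mem_univ i)
  linarith [le_abs_self (∑ j, L i j)]

theorem abs_le_of_supersolution {ρ ρ' : ℝ → ι → ℝ} (hL : ∀ i j, i ≠ j → 0 ≤ L i j)
    (hu : IsPrimitiveOn u g a b) (hρ : IsPrimitiveOn ρ ρ' a b)
    (hρpos : ∀ t ∈ Icc a b, ∀ i, 0 ≤ ρ t i)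
    (hsuper : ∀ᵐ t, t ∈ Icc a b → ∀ i, (L *ᵥ ρ t) i + w t i ≤ ρ' t i)
    (hsub : ∀ᵐ t, t ∈ Icc a b → ∀ i,
      (0 ≤ u t i → g t i ≤ ∑ j, L i j * |u t j| + w t i) ∧
      (u t i ≤ 0 → -g t i ≤ ∑ j, L i j * |u t j| + w t i))
    (ha : ∀ i, |u a i| ≤ ρ a i) : ∀ t ∈ Icc a b, ∀ i, |u t i| ≤ ρ t i := by
  obtain ⟨K, hK0, hK⟩ := exists_rowSum_add_one_le L
  intro t ht i
  refine le_of_forall_pos_lt_add fun ε hε => ?_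
  -- `ρ + e • 1` is a strict supersolution with margin `η`, and `e t = ε`.
  set η := ε / Real.exp (K * (t - a))
  have hη : 0 < η := by positivity
  set e : ℝ → ℝ := fun s => η * Real.exp (K * (s - a))
  have he : ∀ s, HasDerivAt e (K * e s) s := fun s =>
    ((((hasDerivAt_id s).sub_const a).const_mul K).exp.const_mul η).congr_deriv (by
      simp only [e, id]
      ring)
  have hη_le : ∀ s ∈ Icc a b, η ≤ e s := fun s hs =>
    le_mul_of_one_le_right hη.le (Real.one_le_exp (mul_nonneg hK0 (sub_nonneg.2 hs.1)))
  have hv : IsPrimitiveOn (fun s => ρ s + e s • 1) (fun s => ρ' s + (K * e s) • 1) a b :=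
    hρ.add (isPrimitiveOn_of_hasDerivAt (fun s => (he s).smul_const 1) (by fun_prop))
  have hvsuper : ∀ᵐ s, s ∈ Icc a b → ∀ j,
      (L *ᵥ (ρ s + e s • 1)) j + w s j + η ≤ (ρ' s + (K * e s) • 1) j := by
    filter_upwards [hsuper] with s hs hsab j
    have hrow : (∑ k, L j k) * e s + η ≤ K * e s := by
      nlinarith [hK j, hη_le s hsab]
    simp only [L.mulVec_add_smul_one_apply, Pi.add_apply, Pi.smul_apply, Pi.one_apply,
      smul_eq_mul, mul_one]
    linarith [hs hsab j]
  have hlt := abs_lt_of_strict_supersolution hL hu hv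
    (fun s hs j => by simpa using add_pos_of_nonneg_of_pos (hρpos s hs j) (hη.trans_le
      (hη_le s hs)))
    hη hvsuper hsub (fun j => by simpa [e, η] using (ha j).trans_lt (lt_add_of_pos_right _ hη))
    t ht i
  simpa [e, η, div_mul_cancel₀ _ (Real.exp_pos _).ne'] using hlt

end Comparison

lemma ae_deriv_sub_le_of_quasimonotone {ι : Type*} [Fintype ι] {A : Set (ι → ℝ)}
    {f : (ι → ℝ) → ι → ℝ} {L : Matrix ι ι ℝ} {S : Set ℝ} {ξ₁ ξ₂ g₁ g₂ w₁ w₂ : ℝ → ι → ℝ}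
    (hmem₁ : ∀ t ∈ S, ξ₁ t ∈ A) (hmem₂ : ∀ t ∈ S, ξ₂ t ∈ A)
    (hpert₁ : ∀ᵐ t, t ∈ S → ∀ i, |g₁ t i - f (ξ₁ t) i| ≤ w₁ t i)
    (hpert₂ : ∀ᵐ t, t ∈ S → ∀ i, |g₂ t i - f (ξ₂ t) i| ≤ w₂ t i)
    (hquasi : ∀ x ∈ A, ∀ y ∈ A, ∀ i, y i ≤ x i → f x i - f y i ≤ ∑ j, L i j * |x j - y j|) :
    ∀ᵐ t, t ∈ S → ∀ i,
      (0 ≤ ξ₁ t i - ξ₂ t i →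
        g₁ t i - g₂ t i ≤ ∑ j, L i j * |ξ₁ t j - ξ₂ t j| + (w₁ t i + w₂ t i)) ∧
      (ξ₁ t i - ξ₂ t i ≤ 0 →
        -(g₁ t i - g₂ t i) ≤ ∑ j, L i j * |ξ₁ t j - ξ₂ t j| + (w₁ t i + w₂ t i)) := by
  filter_upwards [hpert₁, hpert₂] with t h₁ h₂ ht i
  have e₁ := abs_le.1 (h₁ ht i)
  have e₂ := abs_le.1 (h₂ ht i)
  refine ⟨fun hi => ?_, fun hi => ?_⟩
  · linarith [hquasi _ (hmem₁ t ht) _ (hmem₂ t ht) i (sub_nonneg.1 hi)]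
  · have := hquasi _ (hmem₂ t ht) _ (hmem₁ t ht) i (sub_nonpos.1 hi)
    simp only [abs_sub_comm (ξ₂ t _)] at this
    linarith

theorem componentwise_comparison_general {n : ℕ} (τ : ℝ) (hτ : 0 < τ)
    (A : Set (Fin n → ℝ)) (f : (Fin n → ℝ) → (Fin n → ℝ))
    (ξ₁ ξ₂ g₁ g₂ w₁ w₂ : ℝ → (Fin n → ℝ))
    (hmem₁ : ∀ t ∈ Icc (0:ℝ) τ, ξ₁ t ∈ A) (hmem₂ : ∀ t ∈ Icc (0:ℝ) τ, ξ₂ t ∈ A)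
    (hg₁ : IntervalIntegrable g₁ volume 0 τ)
    (hg₂ : IntervalIntegrable g₂ volume 0 τ)
    (hw₁ : IntervalIntegrable w₁ volume 0 τ)
    (hw₂ : IntervalIntegrable w₂ volume 0 τ)
    (hFTC₁ : ∀ t ∈ Icc (0:ℝ) τ, ξ₁ t = ξ₁ 0 + ∫ s in (0:ℝ)..t, g₁ s)
    (hFTC₂ : ∀ t ∈ Icc (0:ℝ) τ, ξ₂ t = ξ₂ 0 + ∫ s in (0:ℝ)..t, g₂ s)
    (hpert₁ : ∀ᵐ t ∂volume, t ∈ Icc (0:ℝ) τ → ∀ i, |g₁ t i - f (ξ₁ t) i| ≤ w₁ t i)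
    (hpert₂ : ∀ᵐ t ∂volume, t ∈ Icc (0:ℝ) τ → ∀ i, |g₂ t i - f (ξ₂ t) i| ≤ w₂ t i)
    (L : Matrix (Fin n) (Fin n) ℝ) (hL : ∀ i j, i ≠ j → 0 ≤ L i j)
    (hquasi : ∀ x ∈ A, ∀ y ∈ A, ∀ i, y i ≤ x i →
      f x i - f y i ≤ ∑ j, L i j * |x j - y j|)
    (ρ : ℝ → (Fin n → ℝ)) (hρcont : ContinuousOn ρ (Icc (0:ℝ) τ))
    (hρpos : ∀ t ∈ Icc (0:ℝ) τ, ∀ i, 0 ≤ ρ t i)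
    (hρFTC : ∀ t ∈ Icc (0:ℝ) τ,
      ρ t = ρ 0 + ∫ s in (0:ℝ)..t, (L.mulVec (ρ s) + w₁ s + w₂ s))
    (h0 : ∀ i, |ξ₁ 0 i - ξ₂ 0 i| ≤ ρ 0 i) :
    ∀ t ∈ Icc (0:ℝ) τ, ∀ i, |ξ₁ t i - ξ₂ t i| ≤ ρ t i := by
  have hu : IsPrimitiveOn (fun t => ξ₁ t - ξ₂ t) (fun t => g₁ t - g₂ t) 0 τ :=
    IsPrimitiveOn.sub ⟨hg₁, hFTC₁⟩ ⟨hg₂, hFTC₂⟩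
  have hLρ : IntervalIntegrable (fun s => L *ᵥ ρ s) volume 0 τ :=
    (L.mulVecLin.continuous_of_finiteDimensional.comp_continuousOn
      hρcont).intervalIntegrable_of_Icc hτ.le
  have hρ : IsPrimitiveOn ρ (fun s => L *ᵥ ρ s + w₁ s + w₂ s) 0 τ :=
    ⟨(hLρ.add hw₁).add hw₂, hρFTC⟩
  exact abs_le_of_supersolution (w := fun t => w₁ t + w₂ t) hL hu hρ hρpos
    (ae_of_all _ fun t _ i => by simp [add_assoc])
    (ae_deriv_sub_le_of_quasimonotone hmem₁ hmem₂ hpert₁ hpert₂ hquasi) h0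

/-- component-wise comparison lemma for perturbed solutions.
Absolute continuity of `ξᵢ` and `ρ` is expressed through the fundamental theorem
of calculus: `ξᵢ t = ξᵢ 0 + ∫₀ᵗ gᵢ` with `gᵢ` integrable (a.e. derivative), and
`ρ` solves the linear comparison ODE `ρ' = Lρ + w₁ + w₂` in integral form. -/
theorem componentwise_comparison {n : ℕ} (τ : ℝ) (hτ : 0 < τ)
    (A : Set (Fin n → ℝ)) (f : (Fin n → ℝ) → (Fin n → ℝ)) (hf : Continuous f)
    (ξ₁ ξ₂ g₁ g₂ w₁ w₂ : ℝ → (Fin n → ℝ))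
    (hmem₁ : ∀ t ∈ Icc (0:ℝ) τ, ξ₁ t ∈ A) (hmem₂ : ∀ t ∈ Icc (0:ℝ) τ, ξ₂ t ∈ A)
    (hg₁ : IntervalIntegrable g₁ volume 0 τ)
    (hg₂ : IntervalIntegrable g₂ volume 0 τ)
    (hw₁ : IntervalIntegrable w₁ volume 0 τ)
    (hw₂ : IntervalIntegrable w₂ volume 0 τ)
    (hwpos : ∀ t ∈ Icc (0:ℝ) τ, ∀ i, 0 ≤ w₁ t i ∧ 0 ≤ w₂ t i)
    (hFTC₁ : ∀ t ∈ Icc (0:ℝ) τ, ξ₁ t = ξ₁ 0 + ∫ s in (0:ℝ)..t, g₁ s)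
    (hFTC₂ : ∀ t ∈ Icc (0:ℝ) τ, ξ₂ t = ξ₂ 0 + ∫ s in (0:ℝ)..t, g₂ s)
    (hpert₁ : ∀ᵐ t ∂volume, t ∈ Icc (0:ℝ) τ → ∀ i, |g₁ t i - f (ξ₁ t) i| ≤ w₁ t i)
    (hpert₂ : ∀ᵐ t ∂volume, t ∈ Icc (0:ℝ) τ → ∀ i, |g₂ t i - f (ξ₂ t) i| ≤ w₂ t i)
    (L : Matrix (Fin n) (Fin n) ℝ) (hL : ∀ i j, i ≠ j → 0 ≤ L i j)
    (hquasi : ∀ x ∈ A, ∀ y ∈ A, ∀ i, y i ≤ x i →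
      f x i - f y i ≤ ∑ j, L i j * |x j - y j|)
    (ρ : ℝ → (Fin n → ℝ)) (hρcont : ContinuousOn ρ (Icc (0:ℝ) τ))
    (hρpos : ∀ t ∈ Icc (0:ℝ) τ, ∀ i, 0 ≤ ρ t i)
    (hρFTC : ∀ t ∈ Icc (0:ℝ) τ,
      ρ t = ρ 0 + ∫ s in (0:ℝ)..t, (L.mulVec (ρ s) + w₁ s + w₂ s))
    (h0 : ∀ i, |ξ₁ 0 i - ξ₂ 0 i| ≤ ρ 0 i) :
    ∀ t ∈ Icc (0:ℝ) τ, ∀ i, |ξ₁ t i - ξ₂ t i| ≤ ρ t i :=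
  componentwise_comparison_general τ hτ A f ξ₁ ξ₂ g₁ g₂ w₁ w₂ hmem₁ hmem₂ hg₁ hg₂ hw₁ hw₂ hFTC₁
    hFTC₂ hpert₁ hpert₂ L hL hquasi ρ hρcont hρpos hρFTC h0
end

section
/- Abstraction soundness: Let S₁ be the sampled system on X₁ = ℝⁿ with input set U₁ and transition F₁(x₀,u) = {ξ(τ) : ξ is a solution of ξ' ∈ f(ξ,u) + W on [0,τ] with ξ(0) = x₀}. Let X₂ be a cover of ℝⁿ by nonempty closed hyper-intervals, X̄₂ ⊆ X₂ a subset of compact cells, U₂ ⊆ U₁, and let β : ℝ₊ⁿ × U₂ → ℝ₊ⁿ be a growth bound on K = ⋃_{x₂ ∈ X̄₂} x₂ and U₂, i.e.: β(r,u) ≥ β(r',u) whenever r ≥ r', the unperturbed flow φ(τ,·,u) is defined on K for u ∈ U₂, and for every solution ξ of the perturbed inclusion on [0,τ] with input u ∈ U₂ and ξ(0), p ∈ K, |ξ(τ) − φ(τ,p,u)| ≤ β(|ξ(0) − p|, u). Suppose S₂ is a simple system with state set X₂, input set U₂ and transition F₂ satisfying: (i) for x₂ = [a,b] ∈ X̄₂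 with center c = (a+b)/2 and radius r = (b−a)/2, r' = β(r,u): if (φ(τ,c,u) + [−r',r']) ∩ x₂' ≠ ∅ then x₂' ∈ F₂(x₂,u); and (ii) F₂(x₂,u) = ∅ for x₂ ∈ X₂ \ X̄₂. Then the membership relation ∈ is a feedback refinement relation from S₁ to S₂. -/
open MeasureTheory Set

/-- `ξ` is a solution on `[0,τ]` of `x' ∈ f(x,u) + [-w,w]` with constant input
`u` (absolute continuity is expressed via the fundamental theorem of calculus). -/
def IsSol {n : ℕ} {U : Type*} (f : (Fin n → ℝ) → U → (Fin n → ℝ))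
    (w : Fin n → ℝ) (u : U) (τ : ℝ) (ξ : ℝ → (Fin n → ℝ)) : Prop :=
  ∃ g : ℝ → (Fin n → ℝ), IntervalIntegrable g volume 0 τ ∧
    (∀ t ∈ Icc (0:ℝ) τ, ξ t = ξ 0 + ∫ s in (0:ℝ)..t, g s) ∧
    (∀ᵐ t ∂volume, t ∈ Icc (0:ℝ) τ → ∀ i, |g t i - f (ξ t) u i| ≤ w i)

/-- The transition function of the sampled system associated with
`x' ∈ f(x,u) + [-w,w]` and sampling time `τ`. -/
def sampledF {n : ℕ} {U : Type*} (f : (Fin n → ℝ) → U → (Fin n → ℝ))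
    (w : Fin n → ℝ) (τ : ℝ) (x₀ : Fin n → ℝ) (u : U) : Set (Fin n → ℝ) :=
  {x | ∃ ξ, IsSol f w u τ ξ ∧ ξ 0 = x₀ ∧ ξ τ = x}

/-! The growth bound, applied with the centre `c` of a compact cell `[a,b]` as reference point,
confines every successor of a point of `[a,b]` to the box `φ(τ,c,u) + [-β(r,u), β(r,u)]`
with `r = (b - a)/2`, because `|x - c| ≤ r` on `[a,b]` and `β` is monotone. Condition (i) then
puts every cell meeting that successor into `F₂([a,b],u)`. Condition (ii) makes cells outside
`Cbar` blocking, and on `Cbar` the unperturbed flow is a solution of the perturbed inclusion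
since `0 ∈ W`, so `F₁(x,u)` is nonempty. -/

theorem IsSol.mono_perturbation {n : ℕ} {U : Type*} {f : (Fin n → ℝ) → U → (Fin n → ℝ)}
    {w w' : Fin n → ℝ} {u : U} {τ : ℝ} {ξ : ℝ → (Fin n → ℝ)}
    (hξ : IsSol f w u τ ξ) (hww' : w ≤ w') : IsSol f w' u τ ξ := by
  obtain ⟨g, hg, hξg, hgf⟩ := hξ
  exact ⟨g, hg, hξg, hgf.mono fun t ht htτ i => (ht htτ i).trans (hww' i)⟩

theorem pi_mem_Icc_of_abs_sub_le {ι : Type*} {x c r : ι → ℝ} (h : ∀ i, |x i - c i| ≤ r i) :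
    x ∈ Icc (c - r) (c + r) :=
  ⟨fun i => (mem_Icc_iff_abs_le.mp (abs_sub_comm (x i) (c i) ▸ h i)).1,
    fun i => (mem_Icc_iff_abs_le.mp (abs_sub_comm (x i) (c i) ▸ h i)).2⟩

theorem pi_center_mem_Icc {ι : Type*} {a b : ι → ℝ} (hab : a ≤ b) :
    (fun j => (a j + b j) / 2) ∈ Icc a b :=
  ⟨fun j => by linarith [hab j], fun j => by linarith [hab j]⟩

theorem pi_abs_sub_center_le_radius {ι : Type*} {a b x : ι → ℝ} (hx : x ∈ Icc a b) :
    (fun j => |x j - (a j + b j) / 2|) ≤ fun j => (b j - a j) / 2 := fun j => by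
  rw [abs_le]
  constructor <;> linarith [hx.1 j, hx.2 j]

theorem IsSol.apply_mem_Icc_of_growthBound {n : ℕ} {U : Type*}
    {f : (Fin n → ℝ) → U → (Fin n → ℝ)} {w : Fin n → ℝ} {u : U} {τ : ℝ}
    {K : Set (Fin n → ℝ)} {φ β : (Fin n → ℝ) → (Fin n → ℝ)} (hβmono : Monotone β)
    (hβ : ∀ ξ, IsSol f w u τ ξ → ξ 0 ∈ K →
      ∀ p ∈ K, ∀ i, |ξ τ i - φ p i| ≤ β (fun j => |ξ 0 j - p j|) i)
    {a b : Fin n → ℝ} (hK : Icc a b ⊆ K) {ξ : ℝ → (Fin n → ℝ)}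
    (hξ : IsSol f w u τ ξ) (hξ0 : ξ 0 ∈ Icc a b) :
    ξ τ ∈ Icc (φ (fun j => (a j + b j) / 2) - β (fun j => (b j - a j) / 2))
      (φ (fun j => (a j + b j) / 2) + β (fun j => (b j - a j) / 2)) := by
  have hc := pi_center_mem_Icc (hξ0.1.trans hξ0.2)
  exact pi_mem_Icc_of_abs_sub_le fun i => (hβ ξ hξ (hK hξ0) _ (hK hc) i).trans
    (hβmono (pi_abs_sub_center_le_radius hξ0) i)

theorem abstraction_sound_general {n : ℕ} {U : Type*}
    (U₁ U₂ : Set U) (hU : U₂ ⊆ U₁)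
    (f : (Fin n → ℝ) → U → (Fin n → ℝ))
    (w : Fin n → ℝ) (hw : ∀ i, 0 ≤ w i)
    (τ : ℝ)
    (C Cbar : Set (Set (Fin n → ℝ)))
    (hcompact : ∀ Ω ∈ Cbar, ∃ a b : Fin n → ℝ, Ω = Icc a b)
    (hcover : ∀ x : Fin n → ℝ, ∃ Ω ∈ C, x ∈ Ω)
    (φτ : (Fin n → ℝ) → U → (Fin n → ℝ))
    (hφ : ∀ u ∈ U₂, ∀ p ∈ ⋃₀ Cbar, ∃ η, IsSol f (fun _ => 0) u τ η ∧
      η 0 = p ∧ η τ = φτ p u)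
    (β : (Fin n → ℝ) → U → (Fin n → ℝ))
    (hβmono : ∀ u ∈ U₂, ∀ r r' : Fin n → ℝ, (∀ i, r' i ≤ r i) →
      ∀ i, β r' u i ≤ β r u i)
    (hβ : ∀ u ∈ U₂, ∀ ξ, IsSol f w u τ ξ → ξ 0 ∈ ⋃₀ Cbar →
      ∀ p ∈ ⋃₀ Cbar, ∀ i, |ξ τ i - φτ p u i| ≤ β (fun j => |ξ 0 j - p j|) u i)
    (F₂ : Set (Fin n → ℝ) → U → Set (Set (Fin n → ℝ)))
    (hF₂i : ∀ a b : Fin n → ℝ, Icc a b ∈ Cbar → ∀ u ∈ U₂, ∀ Ω' ∈ C,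
      (Icc (fun i => φτ (fun j => (a j + b j) / 2) u i -
              β (fun j => (b j - a j) / 2) u i)
           (fun i => φτ (fun j => (a j + b j) / 2) u i +
              β (fun j => (b j - a j) / 2) u i) ∩ Ω').Nonempty →
      Ω' ∈ F₂ (Icc a b) u)
    (hF₂ii : ∀ Ω ∈ C, Ω ∉ Cbar → ∀ u : U, F₂ Ω u = ∅) :
    IsFRRmem C U₁ U₂ (sampledF f w τ) F₂ := by
  refine ⟨hU, hcover, fun Ω hΩ x hx u hu hF₂ne => ?_⟩
  have hΩbar : Ω ∈ Cbar := by
    by_contra hΩbar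
    exact not_nonempty_empty (hF₂ii Ω hΩ hΩbar u ▸ hF₂ne)
  obtain ⟨a, b, rfl⟩ := hcompact Ω hΩbar
  have hcellK : Icc a b ⊆ ⋃₀ Cbar := subset_sUnion_of_mem hΩbar
  obtain ⟨η, hη, hη0, hητ⟩ := hφ u hu x (hcellK hx)
  refine ⟨⟨φτ x u, η, hη.mono_perturbation hw, hη0, hητ⟩, ?_⟩
  rintro _ ⟨ξ, hξ, hξ0, rfl⟩ Ω' hΩ' hξΩ'
  have hbox := hξ.apply_mem_Icc_of_growthBound (φ := (φτ · u))
    (fun r' r hr => hβmono u hu r r' hr) (hβ u hu) hcellK (hξ0 ▸ hx)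
  exact hF₂i a b hΩbar u hu Ω' hΩ' ⟨ξ τ, hbox, hξΩ'⟩

/-- abstraction soundness.  Let `S₁` be the sampled system of the
perturbed control system, `C` a cover of `ℝⁿ` by nonempty closed hyper-intervals
with compact cells `Cbar ⊆ C`, `φτ` the time-`τ` map of the unperturbed flow
(defined on `K = ⋃ Cbar`), `β` a growth bound, and `F₂` a transition function
satisfying the two construction conditions.  Then `∈` is a feedback refinement
relation from `S₁` to `S₂`. -/
theorem abstraction_sound {n : ℕ} {U : Type*}
    (U₁ U₂ : Set U) (hU : U₂ ⊆ U₁)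
    (f : (Fin n → ℝ) → U → (Fin n → ℝ))
    (hlip : ∀ u : U, LocallyLipschitz (fun x => f x u))
    (w : Fin n → ℝ) (hw : ∀ i, 0 ≤ w i)
    (τ : ℝ) (hτ : 0 < τ)
    (C Cbar : Set (Set (Fin n → ℝ))) (hsub : Cbar ⊆ C)
    (hcells : ∀ Ω ∈ C, (Ω : Set (Fin n → ℝ)).Nonempty ∧ ∃ a b : Fin n → EReal,
      Ω = {x | ∀ i, a i ≤ (x i : EReal) ∧ (x i : EReal) ≤ b i})
    (hcompact : ∀ Ω ∈ Cbar, ∃ a b : Fin n → ℝ, Ω = Icc a b)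
    (hcover : ∀ x : Fin n → ℝ, ∃ Ω ∈ C, x ∈ Ω)
    (φτ : (Fin n → ℝ) → U → (Fin n → ℝ))
    (hφ : ∀ u ∈ U₂, ∀ p ∈ ⋃₀ Cbar, ∃ η, IsSol f (fun _ => 0) u τ η ∧
      η 0 = p ∧ η τ = φτ p u)
    (β : (Fin n → ℝ) → U → (Fin n → ℝ))
    (hβmono : ∀ u ∈ U₂, ∀ r r' : Fin n → ℝ, (∀ i, r' i ≤ r i) →
      ∀ i, β r' u i ≤ β r u i)
    (hβ : ∀ u ∈ U₂, ∀ ξ, IsSol f w u τ ξ → ξ 0 ∈ ⋃₀ Cbar →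
      ∀ p ∈ ⋃₀ Cbar, ∀ i, |ξ τ i - φτ p u i| ≤ β (fun j => |ξ 0 j - p j|) u i)
    (F₂ : Set (Fin n → ℝ) → U → Set (Set (Fin n → ℝ)))
    (hF₂i : ∀ a b : Fin n → ℝ, Icc a b ∈ Cbar → ∀ u ∈ U₂, ∀ Ω' ∈ C,
      (Icc (fun i => φτ (fun j => (a j + b j) / 2) u i -
              β (fun j => (b j - a j) / 2) u i)
           (fun i => φτ (fun j => (a j + b j) / 2) u i +
              β (fun j => (b j - a j) / 2) u i) ∩ Ω').Nonempty →
      Ω' ∈ F₂ (Icc a b) u)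
    (hF₂ii : ∀ Ω ∈ C, Ω ∉ Cbar → ∀ u : U, F₂ Ω u = ∅) :
    IsFRRmem C U₁ U₂ (sampledF f w τ) F₂ :=
  abstraction_sound_general U₁ U₂ hU f w hw τ C Cbar hcompact hcover φτ hφ β hβmono hβ F₂ hF₂i hF₂ii
end

section
/- Necessity of condition (i) of feedback refinement relations via blocking: Let S₁, S₂ be simple systems and Q ⊆ X₁ × X₂ a strict relation. Fix (x₁,x₂) ∈ Q and u ∈ U₂ with F₂(x₂,u) ≠ ∅. Suppose that for every one-state controller C (with state set {0}, input alphabet X₂, output alphabet U₂) that is feedback composable with S₂, C is also feedback composable with Q ∘ S₁ (the system S₁ with output map x ↦ Q(x)). Then F₁(x₁,u) ≠ ∅. Here feedback composability of C with S₂ requires that whenever the controller output u' is produced at controller state x_c in response to measured state x₂' and F₂(x₂',u') = ∅, the controller blocks, i.e., F_c(x_c, v) = ∅ for the corresponding internal variable v; composability with Q∘S₁ imposes the analogous condition with F₁ at any x₁' ∈ Q⁻¹(x₂'). -/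
structure Sys (Uin V X Y : Type) where
  init : Set X
  F : X → V → Set X
  H : X → Uin → Set (Y × V)

def Moore {Uin V X Y : Type} (S : Sys Uin V X Y) : Prop :=
  ∀ x u y v, (y, v) ∈ S.H x u → ∀ u', ∃ v', (y, v') ∈ S.H x u'

/-- `S₁` is feedback composable with `S₂`. -/
def FC {V₁ X₁ Y₁ V₂ X₂ Y₂ : Type}
    (S₁ : Sys Y₂ V₁ X₁ Y₁) (S₂ : Sys Y₁ V₂ X₂ Y₂) : Prop :=
  Moore S₂ ∧
  ∀ x₁ x₂ y₁ y₂ v₁ v₂, (y₂, v₂) ∈ S₂.H x₂ y₁ → (y₁, v₁) ∈ S₁.H x₁ y₂ →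
    S₂.F x₂ v₂ = ∅ → S₁.F x₁ v₁ = ∅

/-- The simple system with transition `F`. -/
def simpleSys {X U : Type} (F : X → U → Set X) : Sys U U X X :=
  ⟨Set.univ, F, fun x u => {(x, u)}⟩

/-- `Q ∘ S₁`: the simple system `S₁` with output map `x ↦ Q(x) × {u}`. -/
def quantized {X₁ X₂ U : Type} (Q : X₁ → X₂ → Prop) (F₁ : X₁ → U → Set X₁) :
    Sys U U X₁ X₂ :=
  ⟨Set.univ, F₁, fun x u => {p | Q x p.1 ∧ p.2 = u}⟩

/-! Test the hypothesis on the one-state controller that always applies `u` and blocks exactly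
where `F₂(·, u)` is empty. It is composable with `S₂`, hence with `Q ∘ S₁`; as it does not block
on the measurement `x₂ ∈ Q(x₁)`, the plant `S₁` cannot block at `(x₁, u)` either. -/

theorem moore_simpleSys {X U : Type} (F : X → U → Set X) : Moore (simpleSys F) := by
  rintro x u y v h u'
  obtain ⟨rfl, -⟩ := Prod.mk.inj h
  exact ⟨u', rfl⟩

theorem fc_simpleSys_iff {Vc Xc X U : Type} (C : Sys X Vc Xc U) (F : X → U → Set X) :
    FC C (simpleSys F) ↔
      ∀ xc x u v, (u, v) ∈ C.H xc x → F x u = ∅ → C.F xc v = ∅ := by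
  refine ⟨fun h xc x u v hH hF => h.2 xc x u x v u rfl hH hF, fun h => ⟨moore_simpleSys F, ?_⟩⟩
  rintro xc x u y v u' hS hH hF
  obtain ⟨rfl, rfl⟩ := Prod.mk.inj hS
  exact h xc y u' v hH hF

theorem FC.nonempty_of_quantized {Vc Xc X₁ X₂ U : Type} {C : Sys X₂ Vc Xc U}
    {Q : X₁ → X₂ → Prop} {F₁ : X₁ → U → Set X₁} (h : FC C (quantized Q F₁))
    {xc : Xc} {x₁ : X₁} {y : X₂} {u : U} {v : Vc} (hH : (u, v) ∈ C.H xc y) (hQ : Q x₁ y)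
    (hF : (C.F xc v).Nonempty) : (F₁ x₁ u).Nonempty := by
  rw [Set.nonempty_iff_ne_empty] at hF ⊢
  exact mt (h.2 xc x₁ u y v u (show Q x₁ y ∧ u = u from ⟨hQ, rfl⟩) hH) hF

def blockingController {X U : Type} (F : X → U → Set X) (u : U) : Sys X X Unit U :=
  ⟨Set.univ, fun _ x => {_c | (F x u).Nonempty}, fun _ x => {(u, x)}⟩

theorem fc_blockingController_simpleSys {X U : Type} (F : X → U → Set X) (u : U) :
    FC (blockingController F u) (simpleSys F) := by
  refine (fc_simpleSys_iff _ F).2 fun _ x u' v hH hF => ?_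
  obtain ⟨rfl, rfl⟩ := Prod.mk.inj hH
  simp [blockingController, hF]

theorem frr_necessity_blocking_general {X₁ X₂ U : Type}
    (F₁ : X₁ → U → Set X₁) (F₂ : X₂ → U → Set X₂) (Q : X₁ → X₂ → Prop)
    (x₁ : X₁) (x₂ : X₂) (hx : Q x₁ x₂) (u : U) (hne : (F₂ x₂ u).Nonempty)
    (hcomp : ∀ (Vc : Type) (C : Sys X₂ Vc Unit U),
      FC C (simpleSys F₂) → FC C (quantized Q F₁)) :
    (F₁ x₁ u).Nonempty :=
  (hcomp X₂ _ (fc_blockingController_simpleSys F₂ u)).nonempty_of_quantized (xc := ())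
    rfl hx ⟨(), hne⟩

/-- necessity of condition (i) of feedback refinement relations via
blocking.  Fix `(x₁,x₂) ∈ Q` and `u` with `F₂(x₂,u) ≠ ∅`.  If every one-state
controller (state set `Unit`, input alphabet `X₂`, output alphabet `U`) that is
feedback composable with `S₂` is also feedback composable with `Q ∘ S₁`, then
`F₁(x₁,u) ≠ ∅`. -/
theorem frr_necessity_blocking {X₁ X₂ U : Type}
    (F₁ : X₁ → U → Set X₁) (F₂ : X₂ → U → Set X₂) (Q : X₁ → X₂ → Prop)
    (hstrict : ∀ x₁, ∃ x₂, Q x₁ x₂)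
    (x₁ : X₁) (x₂ : X₂) (hx : Q x₁ x₂) (u : U) (hne : (F₂ x₂ u).Nonempty)
    (hcomp : ∀ (Vc : Type) (C : Sys X₂ Vc Unit U),
      FC C (simpleSys F₂) → FC C (quantized Q F₁)) :
    (F₁ x₁ u).Nonempty :=
  frr_necessity_blocking_general F₁ F₂ Q x₁ x₂ hx u hne hcomp
end
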